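/- Let (F^α) be the vector potential of a flat F-manifold with unit A, with F^α ∈ ℂ[[t^1,…,t^N]]. Then there exists a unique family of formal power series Ω^{α,d}_β ∈ ℂ[[t^1,…,t^N]] (1 ≤ α,β ≤ N, d ≥ 0) such that: Ω^{α,0}_β = ∂F^α/∂t^β − (∂F^α/∂t^β)(0); the constant term of Ω^{α,d}_β vanishes for every d ≥ 0; and ∂Ω^{α,d}_β/∂t^γ = Σ_μ c^μ_{γβ} Ω^{α,d−1}_μ for every d ≥ 1 and all α,β,γ. (This is the ancestor calibration.) -/

import Mathlib

/-!
Ancestor calibration of a flat F-manifold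
(Arsie–Buryak–Lorenzoni–Rossi, "Semisimple flat F-manifolds in higher genus").
-/

noncomputable section
open MvPowerSeries

variable {N : ℕ}

/-- The partial derivative `∂/∂t^β` of a formal power series in `t^1,…,t^N`. -/
def pdN (β : Fin N) (F : MvPowerSeries (Fin N) ℂ) : MvPowerSeries (Fin N) ℂ :=
  (fun d => ((d β + 1 : ℕ) : ℂ) * MvPowerSeries.coeff (d + Finsupp.single β 1) F :
    (Fin N →₀ ℕ) → ℂ)

/-!
The recursion asks for `Ω^{α,d+1}_β` as a primitive of the 1-form `γ ↦ ∑ μ, c^μ_{γβ} Ω^{α,d}_μ`.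
Over a field of characteristic zero a closed 1-form of power series has exactly one primitive
with vanishing constant term (formal Poincaré lemma), so everything reduces to closedness, which
holds by induction on `d`: differentiating the 1-form in `t^δ` gives a term with third
derivatives of `F`, symmetric in `γ, δ`, plus `c_γ c_δ` applied to `Ω^{α,d-1}` (to `δ^α` when
`d = 0`), which is symmetric by associativity.
-/

namespace MvPowerSeries

open Finsupp

variable {σ R K : Type*}

theorem pderiv_comm [CommSemiring R] (i j : σ) (f : MvPowerSeries σ R) :
    pderiv R i (pderiv R j f) = pderiv R j (pderiv R i f) := by
  ext n
  simp only [coeff_pderiv, add_right_comm n (single i 1) (single j 1), Finsupp.add_apply]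
  rcases eq_or_ne i j with rfl | hij
  · rfl
  · simp only [single_eq_of_ne hij, single_eq_of_ne hij.symm, add_zero]
    ring

theorem coeff_sub_single_mul_comm [CommSemiring R] {G : σ → MvPowerSeries σ R}
    (hG : ∀ i j, pderiv R i (G j) = pderiv R j (G i)) {m : σ →₀ ℕ} {i j : σ}
    (hi : m i ≠ 0) (hj : m j ≠ 0) :
    coeff (m - single i 1) (G i) * m j = coeff (m - single j 1) (G j) * m i := by
  rcases eq_or_ne i j with rfl | hij
  · rfl
  set n := m - single i 1 - single j 1 with hn
  have hi' : single i 1 ≤ m - single j 1 :=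
    single_le_iff.mpr (by rw [tsub_apply, single_eq_of_ne hij, tsub_zero]; omega)
  have hj' : single j 1 ≤ m - single i 1 :=
    single_le_iff.mpr (by rw [tsub_apply, single_eq_of_ne hij.symm, tsub_zero]; omega)
  have hni : n + single i 1 = m - single j 1 := by
    rw [hn, tsub_right_comm, tsub_add_cancel_of_le hi']
  have hnj : n + single j 1 = m - single i 1 := tsub_add_cancel_of_le hj'
  have hmi : n i + 1 = m i := by
    simp only [n, tsub_apply, single_eq_same, single_eq_of_ne hij]
    omega
  have hmj : n j + 1 = m j := by
    simp only [n, tsub_apply, single_eq_same, single_eq_of_ne hij.symm]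
    omega
  rw [← hmi, ← hmj, ← hni, ← hnj]
  push_cast
  simpa only [coeff_pderiv] using congr(coeff n $(hG j i))

section Antiderivative

variable [Field K]

open Classical in
/-- The coefficient at `m ≠ 0` is read off `∂ᵢf = G i` for some `i` with `mᵢ ≠ 0`;
when `(G i)` is closed the choice of `i` does not matter (`coeff_antideriv`). -/
def antideriv (G : σ → MvPowerSeries σ K) : MvPowerSeries σ K := fun m =>
  if h : ∃ i, m i ≠ 0 then coeff (m - single h.choose 1) (G h.choose) / m h.choose else 0

variable {G : σ → MvPowerSeries σ K}

theorem constantCoeff_antideriv : constantCoeff (antideriv G) = 0 := by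
  rw [← coeff_zero_eq_constantCoeff_apply]
  exact dif_neg (by simp)

theorem coeff_antideriv [CharZero K] (hG : ∀ i j, pderiv K i (G j) = pderiv K j (G i))
    {m : σ →₀ ℕ} {i : σ} (hi : m i ≠ 0) :
    coeff m (antideriv G) = coeff (m - single i 1) (G i) / m i := by
  have h : ∃ j, m j ≠ 0 := ⟨i, hi⟩
  refine (dif_pos h).trans ?_
  rw [div_eq_div_iff (Nat.cast_ne_zero.mpr h.choose_spec) (Nat.cast_ne_zero.mpr hi)]
  exact coeff_sub_single_mul_comm hG h.choose_spec hi

theorem pderiv_antideriv [CharZero K] (hG : ∀ i j, pderiv K i (G j) = pderiv K j (G i)) (i : σ) :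
    pderiv K i (antideriv G) = G i := by
  ext n
  have hi : (n + single i 1 : σ →₀ ℕ) i ≠ 0 := by simp
  rw [coeff_pderiv, coeff_antideriv hG hi, add_tsub_cancel_right]
  simp only [coe_add, Pi.add_apply, single_eq_same, Nat.cast_add, Nat.cast_one]
  field_simp

end Antiderivative

end MvPowerSeries

section FlatFManifold

variable {σ K : Type*} [Fintype σ] [Field K] (F : σ → MvPowerSeries σ K)

/-- The 1-form `X(∂_γ ∘ ·)` for the product with structure constants `c^μ_{γβ} = ∂_γ∂_βF^μ`. -/
def cMul (γ : σ) (X : σ → MvPowerSeries σ K) : σ → MvPowerSeries σ K :=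
  fun β => ∑ μ, pderiv K γ (pderiv K β (F μ)) * X μ

def IsAssocPotential : Prop :=
  ∀ α β γ δ : σ,
    ∑ μ, pderiv K β (pderiv K μ (F α)) * pderiv K γ (pderiv K δ (F μ))
      = ∑ μ, pderiv K γ (pderiv K μ (F α)) * pderiv K β (pderiv K δ (F μ))

variable {F}

theorem cMul_comm (hassoc : IsAssocPotential F) (γ δ : σ) (X : σ → MvPowerSeries σ K) :
    cMul F γ (cMul F δ X) = cMul F δ (cMul F γ X) := by
  funext β
  simp only [cMul, Finset.mul_sum, ← mul_assoc]
  rw [Finset.sum_comm]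
  conv_rhs => rw [Finset.sum_comm]
  refine Finset.sum_congr rfl fun ν _ => ?_
  rw [← Finset.sum_mul, ← Finset.sum_mul]
  congr 1
  simpa only [mul_comm] using hassoc ν δ γ β

theorem pderiv_cMul_comm (hassoc : IsAssocPotential F)
    {Ω X : σ → MvPowerSeries σ K} (hΩ : ∀ μ δ, pderiv K δ (Ω μ) = cMul F δ X μ) (β γ δ : σ) :
    pderiv K γ (cMul F δ Ω β) = pderiv K δ (cMul F γ Ω β) := by
  have hleib : ∀ γ δ, pderiv K γ (cMul F δ Ω β)
      = ∑ μ, pderiv K γ (pderiv K δ (pderiv K β (F μ))) * Ω μ + cMul F δ (cMul F γ X) β := by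
    intro γ δ
    simp only [cMul, map_sum, Derivation.leibniz, smul_eq_mul, hΩ, Finset.sum_add_distrib]
    rw [add_comm]
    simp only [mul_comm]
  rw [hleib, hleib, cMul_comm hassoc]
  simp_rw [pderiv_comm γ δ]

variable (F) in
/-- `ancestor F d α β` is `Ω^{α,d}_β`. -/
def ancestor : ℕ → σ → σ → MvPowerSeries σ K
  | 0, α, β => pderiv K β (F α) - C (constantCoeff (pderiv K β (F α)))
  | d + 1, α, β => antideriv fun γ => cMul F γ (ancestor d α) β

theorem constantCoeff_ancestor (d : ℕ) (α β : σ) : constantCoeff (ancestor F d α β) = 0 := by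
  cases d with
  | zero => simp [ancestor]
  | succ d => exact constantCoeff_antideriv

theorem pderiv_ancestor_zero [DecidableEq σ] (α μ δ : σ) :
    pderiv K δ (ancestor F 0 α μ) = cMul F δ (Pi.single α 1) μ := by
  simp [ancestor, cMul, pderiv_comm δ μ, Pi.single_apply]

variable [CharZero K]

theorem pderiv_ancestor_succ (hassoc : IsAssocPotential F) (d : ℕ) (α β γ : σ) :
    pderiv K γ (ancestor F (d + 1) α β) = cMul F γ (ancestor F d α) β := by
  classical
  induction d generalizing β γ with
  | zero =>
    exact pderiv_antideriv (pderiv_cMul_comm hassoc (pderiv_ancestor_zero α) β) γ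
  | succ d ih =>
    exact pderiv_antideriv (pderiv_cMul_comm hassoc ih β) γ

theorem existsUnique_ancestor (hassoc : IsAssocPotential F) :
    ∃! Ω : ℕ → σ → σ → MvPowerSeries σ K,
      (∀ α β, Ω 0 α β = pderiv K β (F α) - C (constantCoeff (pderiv K β (F α)))) ∧
      (∀ d α β, constantCoeff (Ω d α β) = 0) ∧
      (∀ d α β γ, pderiv K γ (Ω (d + 1) α β) = ∑ μ, pderiv K γ (pderiv K β (F μ)) * Ω d α μ) := by
  refine ⟨ancestor F, ⟨fun _ _ => rfl, constantCoeff_ancestor, pderiv_ancestor_succ hassoc⟩, ?_⟩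
  rintro Ω ⟨h0, hconst, hderiv⟩
  funext d
  induction d with
  | zero => funext α β; exact h0 α β
  | succ d ih =>
    funext α β
    refine pderiv.ext (fun γ => ?_) (by rw [hconst, constantCoeff_ancestor])
    rw [hderiv, pderiv_ancestor_succ hassoc, ih]
    rfl

end FlatFManifold

theorem pdN_eq_pderiv (β : Fin N) (f : MvPowerSeries (Fin N) ℂ) :
    pdN β f = pderiv ℂ β f := by
  ext n
  rw [coeff_pderiv, mul_comm, ← Nat.cast_succ]
  rfl

theorem statement15_general {N : ℕ} (F : Fin N → MvPowerSeries (Fin N) ℂ)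
    -- associativity axiom
    (hassoc : ∀ α β γ δ : Fin N,
        ∑ μ, pdN β (pdN μ (F α)) * pdN γ (pdN δ (F μ))
          = ∑ μ, pdN γ (pdN μ (F α)) * pdN β (pdN δ (F μ))) :
    ∃! Ω : ℕ → Fin N → Fin N → MvPowerSeries (Fin N) ℂ,
      (∀ α β : Fin N,
          Ω 0 α β = pdN β (F α)
            - MvPowerSeries.C (MvPowerSeries.constantCoeff (pdN β (F α)))) ∧
      (∀ (d : ℕ) (α β : Fin N), MvPowerSeries.constantCoeff (Ω d α β) = 0) ∧
      (∀ (d : ℕ) (α β γ : Fin N),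
          pdN γ (Ω (d + 1) α β) = ∑ μ, pdN γ (pdN β (F μ)) * Ω d α μ) := by
  simp only [pdN_eq_pderiv] at hassoc ⊢
  exact existsUnique_ancestor hassoc

/-- For the vector potential `(F^α)` of a flat F-manifold with unit `A`
there exists a unique ancestor calibration: a family `Ω^{α,d}_β` of formal power series with
`Ω^{α,0}_β = ∂F^α/∂t^β − (∂F^α/∂t^β)(0)`, vanishing constant terms, and
`∂Ω^{α,d}_β/∂t^γ = Σ_μ c^μ_{γβ} Ω^{α,d−1}_μ` for all `d ≥ 1`. -/
theorem statement15 {N : ℕ} (A : Fin N → ℂ) (F : Fin N → MvPowerSeries (Fin N) ℂ)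
    -- unit axiom: A^μ ∂²F^α/∂t^μ∂t^β = δ^α_β
    (hunit : ∀ α β : Fin N,
        ∑ μ, MvPowerSeries.C (A μ) * pdN μ (pdN β (F α))
          = if α = β then 1 else 0)
    -- associativity axiom
    (hassoc : ∀ α β γ δ : Fin N,
        ∑ μ, pdN β (pdN μ (F α)) * pdN γ (pdN δ (F μ))
          = ∑ μ, pdN γ (pdN μ (F α)) * pdN β (pdN δ (F μ))) :
    ∃! Ω : ℕ → Fin N → Fin N → MvPowerSeries (Fin N) ℂ,
      (∀ α β : Fin N,
          Ω 0 α β = pdN β (F α)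
            - MvPowerSeries.C (MvPowerSeries.constantCoeff (pdN β (F α)))) ∧
      (∀ (d : ℕ) (α β : Fin N), MvPowerSeries.constantCoeff (Ω d α β) = 0) ∧
      (∀ (d : ℕ) (α β γ : Fin N),
          pdN γ (Ω (d + 1) α β) = ∑ μ, pdN γ (pdN β (F μ)) * Ω d α μ) :=
  statement15_general F hassoc

end
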